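/- Let (Φ, ω): 𝕍 → 𝕍' be a morphism of vector spaces with ω ∈ ∧²V*. For w = v⊕α ∈ 𝕍 and w' = v'⊕α' ∈ 𝕍', one has w ~_{(Φ,ω)} w' if and only if for all ψ' ∈ ∧(V')*, ρ(w)(e^ω ∧ Φ*ψ') = e^ω ∧ Φ*(ρ(w')ψ'). -/

import Mathlib

set_option synthInstance.maxHeartbeats 1000000
set_option maxHeartbeats 1000000

open ExteriorAlgebra CliffordAlgebra Module

/-- Clifford action of `V ⊕ V*` on `∧ V*`. -/
noncomputable def cliffordRho {K V : Type*} [Field K] [AddCommGroup V] [Module K V]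
    (w : V × Module.Dual K V) (φ : ExteriorAlgebra K (Module.Dual K V)) :
    ExteriorAlgebra K (Module.Dual K V) :=
  CliffordAlgebra.contractLeft (Module.Dual.eval K V w.1) φ + ExteriorAlgebra.ι K w.2 * φ

/-- Truncated exponential in an algebra, valid for nilpotent arguments of index `≤ n`. -/
noncomputable def expA {K A : Type*} [Field K] [Ring A] [Algebra K A] (n : ℕ) (a : A) : A :=
  ∑ k ∈ Finset.range (n + 1), (k.factorial : K)⁻¹ • a ^ k

/-- The pullback algebra homomorphism `Φ* : ∧ (V')* → ∧ V*` induced by `Φ : V → V'`. -/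
noncomputable def extPullback {K V V' : Type*} [Field K] [AddCommGroup V] [Module K V]
    [AddCommGroup V'] [Module K V'] (Φ : V →ₗ[K] V') :
    ExteriorAlgebra K (Module.Dual K V') →ₐ[K] ExteriorAlgebra K (Module.Dual K V) :=
  ExteriorAlgebra.lift K
    ⟨(ExteriorAlgebra.ι K).comp Φ.dualMap, fun _ => ExteriorAlgebra.ι_sq_zero _⟩

/-!
Contraction `ι_v` is an antiderivation and `ω` is even, so `ι_v (e^ω ∧ x) = ι_v ω ∧ e^ω ∧ x +
e^ω ∧ ι_v x`; moreover `ι_v Φ* = Φ* ι_{Φ v}`, and `e^ω` commutes with 1-forms. Hence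
`ρ(w)(e^ω ∧ Φ*ψ') = e^ω ∧ (Φ*(ι_{Φ v} ψ') + (α + ι_v ω) ∧ Φ*ψ')`, while
`Φ*(ρ(w')ψ') = Φ*(ι_{v'} ψ') + Φ*α' ∧ Φ*ψ'`, which gives the "only if" direction at once.
Conversely, `e^ω ∧ -` is injective on homogeneous elements (its degree-preserving part is the
identity), so `ψ' = 1` yields `Φ*α' = α + ι_v ω`, and then `ψ' = β' ∈ (V')*` yields
`β'(Φ v) = β'(v')` for every `β'`.
-/

theorem Commute.expA_right {K A : Type*} [Field K] [Ring A] [Algebra K A] {a b : A}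
    (h : Commute a b) (n : ℕ) : Commute a (expA (K := K) n b) :=
  Commute.sum_right _ _ _ fun k _ => (h.pow_right k).smul_right _

theorem expA_eq_one_add {K A : Type*} [Field K] [Ring A] [Algebra K A] (n : ℕ) (a : A) :
    expA (K := K) n a = 1 + ∑ k ∈ Finset.range n, ((k + 1).factorial : K)⁻¹ • a ^ (k + 1) := by
  rw [expA, Finset.sum_range_succ', add_comm]
  simp

namespace ExteriorAlgebra

section CommRing

variable {R M : Type*} [CommRing R] [AddCommGroup M] [Module R M]

theorem exteriorPower_one_eq_range_ι : ⋀[R]^1 M = LinearMap.range (ι R) := pow_one _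

theorem commute_ι_of_mem_two {ω : ExteriorAlgebra R M} (hω : ω ∈ ⋀[R]^2 M) (m : M) :
    Commute (ι R m) ω := by
  rw [exteriorPower, pow_two] at hω
  refine Submodule.mul_induction_on hω (fun _ ⟨a, ha⟩ _ ⟨b, hb⟩ => ?_)
    (fun _ _ => Commute.add_right)
  have anticomm (x y : M) : ι R x * ι R y = -(ι R y * ι R x) :=
    eq_neg_of_add_eq_zero_left (ι_add_mul_swap x y)
  rw [← ha, ← hb, Commute, SemiconjBy, ← mul_assoc, anticomm m a, neg_mul, mul_assoc,
    anticomm m b, mul_neg, neg_neg, mul_assoc]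

theorem contractLeft_mem_range_ι_of_mem_two (f : Module.Dual R M) {ω : ExteriorAlgebra R M}
    (hω : ω ∈ ⋀[R]^2 M) : contractLeft f ω ∈ LinearMap.range (ι R) := by
  rw [exteriorPower, pow_two] at hω
  refine Submodule.mul_induction_on hω (fun _ ⟨a, ha⟩ _ ⟨b, hb⟩ => ?_)
    (fun _ _ hx hy => by rw [map_add]; exact add_mem hx hy)
  rw [← ha, ← hb, contractLeft_ι_mul, contractLeft_ι, ← Algebra.commutes, ← Algebra.smul_def,
    ← map_smul, ← map_smul, ← map_sub]
  exact LinearMap.mem_range_self _ _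

theorem contractLeft_mul_of_mem_two (f : Module.Dual R M) {ω : ExteriorAlgebra R M}
    (hω : ω ∈ ⋀[R]^2 M) (x : ExteriorAlgebra R M) :
    contractLeft f (ω * x) = contractLeft f ω * x + ω * contractLeft f x := by
  rw [exteriorPower, pow_two] at hω
  refine Submodule.mul_induction_on hω (fun _ ⟨a, ha⟩ _ ⟨b, hb⟩ => ?_)
    (fun y z hy hz => by rw [add_mul, map_add, hy, hz, map_add, add_mul, add_mul]; abel)
  rw [← ha, ← hb, mul_assoc, contractLeft_ι_mul, contractLeft_ι_mul, contractLeft_ι_mul,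
    contractLeft_ι, ← Algebra.commutes, ← Algebra.smul_def]
  simp only [mul_sub, sub_mul, smul_mul_assoc, mul_smul_comm, mul_assoc]
  abel

theorem contractLeft_pow_succ_mul_of_mem_two (f : Module.Dual R M) {ω : ExteriorAlgebra R M}
    (hω : ω ∈ ⋀[R]^2 M) (k : ℕ) (x : ExteriorAlgebra R M) :
    contractLeft f (ω ^ (k + 1) * x) =
      (k + 1) • (contractLeft f ω * (ω ^ k * x)) + ω ^ (k + 1) * contractLeft f x := by
  induction k generalizing x with
  | zero => simp [contractLeft_mul_of_mem_two f hω]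
  | succ k ih =>
    obtain ⟨m, hm⟩ := contractLeft_mem_range_ι_of_mem_two f hω
    have hcomm : Commute (contractLeft f ω) ω := hm ▸ commute_ι_of_mem_two hω m
    rw [pow_succ', mul_assoc, contractLeft_mul_of_mem_two f hω, ih, mul_add, mul_smul_comm,
      ← mul_assoc ω (contractLeft f ω), ← hcomm.eq, succ_nsmul _ (k + 1)]
    simp only [mul_assoc]
    rw [← mul_assoc ω (ω ^ k), ← pow_succ']
    abel

end CommRing

section Field

variable {K M : Type*} [Field K] [AddCommGroup M] [Module K M]

theorem eq_zero_of_mem_exteriorPower_of_finrank_lt [FiniteDimensional K M] {m : ℕ}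
    (hm : finrank K M < m) {x : ExteriorAlgebra K M} (hx : x ∈ ⋀[K]^m M) : x = 0 := by
  have : ⋀[K]^m M = ⊥ := Submodule.finrank_eq_zero.mp (by
    rw [exteriorPower.finrank_eq, Nat.choose_eq_zero_of_lt hm])
  simpa [this] using hx

theorem eq_zero_of_expA_mul_eq_zero {ω : ExteriorAlgebra K M} (hω : ω ∈ ⋀[K]^2 M) (n : ℕ)
    {i : ℕ} {x : ExteriorAlgebra K M} (hx : x ∈ ⋀[K]^i M) (h : expA (K := K) n ω * x = 0) :
    x = 0 := by
  have hproj := congrArg (GradedAlgebra.proj (fun i : ℕ => ⋀[K]^i M) i) h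
  have hhigher (k : ℕ) : GradedAlgebra.proj (fun i : ℕ => ⋀[K]^i M) i (ω ^ (k + 1) * x) = 0 := by
    rw [GradedAlgebra.proj_apply, DirectSum.decompose_of_mem_ne (fun i : ℕ => ⋀[K]^i M)
      (SetLike.mul_mem_graded (SetLike.pow_mem_graded (k + 1) hω) hx)]
    simp
  rw [expA_eq_one_add, add_mul, one_mul, Finset.sum_mul, map_add, map_sum,
    GradedAlgebra.proj_apply, DirectSum.decompose_of_mem_same (fun i : ℕ => ⋀[K]^i M) hx] at hproj
  simpa [smul_mul_assoc, hhigher] using hproj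

theorem eq_of_expA_mul_eq {ω : ExteriorAlgebra K M} (hω : ω ∈ ⋀[K]^2 M) (n : ℕ) {i : ℕ}
    {x y : ExteriorAlgebra K M} (hx : x ∈ ⋀[K]^i M) (hy : y ∈ ⋀[K]^i M)
    (h : expA (K := K) n ω * x = expA (K := K) n ω * y) : x = y :=
  sub_eq_zero.mp <|
    eq_zero_of_expA_mul_eq_zero hω n (sub_mem hx hy) (by rw [mul_sub, h, sub_self])

theorem contractLeft_mul_pow_eq_zero [FiniteDimensional K M] (f : Module.Dual K M)
    {ω : ExteriorAlgebra K M} (hω : ω ∈ ⋀[K]^2 M) {n : ℕ} (hn : finrank K M ≤ n) :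
    contractLeft f ω * ω ^ n = 0 := by
  have hf : contractLeft f ω ∈ ⋀[K]^1 M := by
    rw [exteriorPower_one_eq_range_ι]; exact contractLeft_mem_range_ι_of_mem_two f hω
  exact eq_zero_of_mem_exteriorPower_of_finrank_lt (by rw [smul_eq_mul]; omega)
    (SetLike.mul_mem_graded hf (SetLike.pow_mem_graded n hω))

theorem contractLeft_expA_mul [CharZero K] [FiniteDimensional K M] (f : Module.Dual K M)
    {ω : ExteriorAlgebra K M} (hω : ω ∈ ⋀[K]^2 M) {n : ℕ} (hn : finrank K M ≤ n)
    (x : ExteriorAlgebra K M) :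
    contractLeft f (expA (K := K) n ω * x) =
      contractLeft f ω * (expA (K := K) n ω * x) + expA (K := K) n ω * contractLeft f x := by
  have hfact (k : ℕ) (y : ExteriorAlgebra K M) :
      ((k + 1).factorial : K)⁻¹ • ((k + 1) • y) = (k.factorial : K)⁻¹ • y := by
    rw [← Nat.cast_smul_eq_nsmul K, smul_smul, Nat.factorial_succ, Nat.cast_mul]
    congr 1
    field_simp
  have hexp (y : ExteriorAlgebra K M) : expA (K := K) n ω * y =
      y + ∑ k ∈ Finset.range n, ((k + 1).factorial : K)⁻¹ • (ω ^ (k + 1) * y) := by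
    simp only [expA_eq_one_add, add_mul, one_mul, Finset.sum_mul, smul_mul_assoc]
  have hleft : contractLeft f ω * (expA (K := K) n ω * x) =
      ∑ k ∈ Finset.range n, (k.factorial : K)⁻¹ • (contractLeft f ω * (ω ^ k * x)) := by
    simp only [expA, Finset.sum_mul, Finset.mul_sum, smul_mul_assoc, mul_smul_comm]
    rw [Finset.sum_range_succ, ← mul_assoc (contractLeft f ω),
      contractLeft_mul_pow_eq_zero f hω hn, zero_mul, smul_zero, add_zero]
  rw [hleft, hexp, hexp, map_add, map_sum]
  simp only [map_smul, contractLeft_pow_succ_mul_of_mem_two f hω, smul_add, hfact,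
    Finset.sum_add_distrib]
  abel

end Field

end ExteriorAlgebra

section Pullback

variable {K V V' : Type*} [Field K] [AddCommGroup V] [Module K V] [AddCommGroup V'] [Module K V']

theorem extPullback_ι (Φ : V →ₗ[K] V') (β : Module.Dual K V') :
    extPullback Φ (ι K β) = ι K (β.comp Φ) := by
  rw [extPullback, lift_ι_apply]
  rfl

theorem contractLeft_extPullback (Φ : V →ₗ[K] V') (v : V)
    (x : ExteriorAlgebra K (Module.Dual K V')) :
    contractLeft (Dual.eval K V v) (extPullback Φ x) =
      extPullback Φ (contractLeft (Dual.eval K V' (Φ v)) x) := by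
  induction x using CliffordAlgebra.left_induction with
  | algebraMap r => simp only [AlgHom.commutes, contractLeft_algebraMap, map_zero]
  | add x y hx hy => simp only [map_add, hx, hy]
  | ι_mul β x hx =>
    rw [map_mul, extPullback_ι, contractLeft_ι_mul, contractLeft_ι_mul, hx, map_sub, map_smul,
      map_mul, extPullback_ι]
    rfl

theorem extPullback_cliffordRho (Φ : V →ₗ[K] V') (w' : V' × Module.Dual K V')
    (ψ' : ExteriorAlgebra K (Module.Dual K V')) :
    extPullback Φ (cliffordRho w' ψ') =
      extPullback Φ (contractLeft (Dual.eval K V' w'.1) ψ') +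
        ι K (w'.2.comp Φ) * extPullback Φ ψ' := by
  rw [cliffordRho, map_add, map_mul, extPullback_ι]

theorem cliffordRho_expA_mul_extPullback [CharZero K] [FiniteDimensional K V]
    (Φ : V →ₗ[K] V') {ω : ExteriorAlgebra K (Module.Dual K V)}
    (hω : ω ∈ ⋀[K]^2 (Module.Dual K V))
    (w : V × Module.Dual K V) (ψ' : ExteriorAlgebra K (Module.Dual K V')) :
    cliffordRho w (expA (K := K) (finrank K V) ω * extPullback Φ ψ') =
      expA (K := K) (finrank K V) ω *
        (extPullback Φ (contractLeft (Dual.eval K V' (Φ w.1)) ψ') +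
          (ι K w.2 + contractLeft (Dual.eval K V w.1) ω) * extPullback Φ ψ') := by
  have hE (β : Module.Dual K V) (y : ExteriorAlgebra K (Module.Dual K V)) :
      ι K β * (expA (K := K) (finrank K V) ω * y) =
        expA (K := K) (finrank K V) ω * (ι K β * y) := by
    rw [← mul_assoc, ((commute_ι_of_mem_two hω β).expA_right _).eq, mul_assoc]
  obtain ⟨β, hβ⟩ := contractLeft_mem_range_ι_of_mem_two (Dual.eval K V w.1) hω
  rw [cliffordRho, contractLeft_expA_mul _ hω Subspace.dual_finrank_eq.le,
    contractLeft_extPullback, ← hβ, hE, hE, add_mul, mul_add, mul_add]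
  abel

end Pullback

theorem pure_spinors_stmt9_general {K V V' : Type*} [Field K] [CharZero K]
    [AddCommGroup V] [Module K V] [FiniteDimensional K V]
    [AddCommGroup V'] [Module K V']
    (Φ : V →ₗ[K] V')
    (ω : ExteriorAlgebra K (Module.Dual K V)) (hω : ω ∈ (⋀[K]^2 (Module.Dual K V)))
    (w : V × Module.Dual K V) (w' : V' × Module.Dual K V') :
    (Φ w.1 = w'.1 ∧
      ExteriorAlgebra.ι K (w'.2.comp Φ) =
        ExteriorAlgebra.ι K w.2 +
          CliffordAlgebra.contractLeft (Module.Dual.eval K V w.1) ω) ↔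
    (∀ ψ' : ExteriorAlgebra K (Module.Dual K V'),
      cliffordRho w (expA (K := K) (Module.finrank K V) ω * extPullback Φ ψ') =
        expA (K := K) (Module.finrank K V) ω * extPullback Φ (cliffordRho w' ψ')) := by
  simp only [cliffordRho_expA_mul_extPullback Φ hω, extPullback_cliffordRho]
  constructor
  · rintro ⟨hv, hα⟩ ψ'
    rw [hv, hα]
  · intro H
    have hα : ι K (w'.2.comp Φ) = ι K w.2 + contractLeft (Dual.eval K V w.1) ω := by
      have H1 := H 1
      simp only [contractLeft_one, map_zero, map_one, mul_one, zero_add] at H1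
      refine (eq_of_expA_mul_eq hω _ (i := 1) ?_ ?_ H1).symm <;>
        rw [exteriorPower_one_eq_range_ι]
      · exact add_mem (LinearMap.mem_range_self _ _) (contractLeft_mem_range_ι_of_mem_two _ hω)
      · exact LinearMap.mem_range_self _ _
    refine ⟨?_, hα⟩
    rw [← sub_eq_zero, ← forall_dual_apply_eq_zero_iff K]
    intro β'
    have Hβ := H (ι K β')
    rw [extPullback_ι, ← hα, mul_add, mul_add, add_left_inj, contractLeft_ι, contractLeft_ι,
      AlgHom.commutes, AlgHom.commutes] at Hβ
    have hβ' := eq_of_expA_mul_eq hω _ (i := 0) (SetLike.algebraMap_mem_graded _ _)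
      (SetLike.algebraMap_mem_graded _ _) Hβ
    rw [algebraMap_inj] at hβ'
    simpa [sub_eq_zero] using hβ'

/-- for a morphism `(Φ, ω)`, `w ~_{(Φ,ω)} w'` holds if and only if
`ρ(w)(e^ω ∧ Φ*ψ') = e^ω ∧ Φ*(ρ(w')ψ')` for all `ψ' ∈ ∧(V')*`.  The relation
`w ~_{(Φ,ω)} w'` means `Φ(v) = v'` and `Φ*α' = α + ι(v)ω`, with the 2-form
`ω ∈ ∧²V*` given as a degree-two element of the exterior algebra. -/
theorem pure_spinors_stmt9 {K V V' : Type*} [Field K] [CharZero K]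
    [AddCommGroup V] [Module K V] [FiniteDimensional K V]
    [AddCommGroup V'] [Module K V'] [FiniteDimensional K V']
    (Φ : V →ₗ[K] V')
    (ω : ExteriorAlgebra K (Module.Dual K V)) (hω : ω ∈ (⋀[K]^2 (Module.Dual K V)))
    (w : V × Module.Dual K V) (w' : V' × Module.Dual K V') :
    (Φ w.1 = w'.1 ∧
      ExteriorAlgebra.ι K (w'.2.comp Φ) =
        ExteriorAlgebra.ι K w.2 +
          CliffordAlgebra.contractLeft (Module.Dual.eval K V w.1) ω) ↔
    (∀ ψ' : ExteriorAlgebra K (Module.Dual K V'),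
      cliffordRho w (expA (K := K) (Module.finrank K V) ω * extPullback Φ ψ') =
        expA (K := K) (Module.finrank K V) ω * extPullback Φ (cliffordRho w' ψ')) :=
  pure_spinors_stmt9_general Φ ω hω w w'
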